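/- arXiv:0709.3275 — 4 statements merged into one kernel-verified Lean document; each statement's English description precedes it below -/
import Mathlib

section
/- Let q ∈ ℂ with 0 < |q| < 1 and let a, b, c ∈ ℂ* with c·qⁿ ≠ 1 for every integer n ≥ 0. Define φ(z) = Σ_{n=0}^∞ ((a;q)_n (b;q)_n)/((c;q)_n (q;q)_n) zⁿ for |z| < 1. Then for every z ∈ ℂ with |z| < 1 and abz ≠ c/q, one has φ(q²z) − (((a+b)z − (1 + c/q))/(abz − c/q))·φ(qz) + ((z − 1)/(abz − c/q))·φ(z) = 0. -/
/-!
With `tₙ` the coefficients of `φ`, the ratio `tₙ₊₁ / tₙ = (1 - a qⁿ)(1 - b qⁿ) / ((1 - c qⁿ)(1 - qⁿ⁺¹))`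
tends to `1`, so the series converges on the unit disc. Clearing denominators,
`tₙ₊₁ (1 - qⁿ⁺¹)(1 - (c/q) qⁿ⁺¹) zⁿ⁺¹ = z · tₙ (1 - a qⁿ)(1 - b qⁿ) zⁿ`; summing over `n`, and
expanding each product `(1 - x qⁿ)(1 - y qⁿ)` so that `qⁿ zⁿ` and `q²ⁿ zⁿ` turn into evaluations
of `φ` at `qz` and `q²z`, gives the equation multiplied by `abz - c/q`.
-/

open Filter Topology

/-- The finite q-Pochhammer symbol `(x; q)_n = ∏_{k=0}^{n-1} (1 - x qᵏ)`. -/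
noncomputable def qPoch (q x : ℂ) (n : ℕ) : ℂ :=
  ∏ k ∈ Finset.range n, (1 - x * q ^ k)

/-- The basic hypergeometric series `₂φ₁(a,b;c;q;z)`. -/
noncomputable def basicHypergeometric (q a b c z : ℂ) : ℂ :=
  ∑' n : ℕ, qPoch q a n * qPoch q b n / (qPoch q c n * qPoch q q n) * z ^ n

lemma qPoch_succ (q x : ℂ) (n : ℕ) :
    qPoch q x (n + 1) = qPoch q x n * (1 - x * q ^ n) :=
  Finset.prod_range_succ _ _

lemma hasSum_mul_one_sub_mul_one_sub (t : ℕ → ℂ) (q x y z : ℂ)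
    (h₀ : Summable fun n => t n * z ^ n) (h₁ : Summable fun n => t n * (q * z) ^ n)
    (h₂ : Summable fun n => t n * (q ^ 2 * z) ^ n) :
    HasSum (fun n => t n * ((1 - x * q ^ n) * (1 - y * q ^ n)) * z ^ n)
      (∑' n, t n * z ^ n - (x + y) * ∑' n, t n * (q * z) ^ n
        + x * y * ∑' n, t n * (q ^ 2 * z) ^ n) := by
  have hterm : (fun n => t n * ((1 - x * q ^ n) * (1 - y * q ^ n)) * z ^ n) = fun n =>
      t n * z ^ n - (x + y) * (t n * (q * z) ^ n) + x * y * (t n * (q ^ 2 * z) ^ n) := by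
    funext n
    ring
  rw [hterm]
  exact (h₀.hasSum.sub (h₁.hasSum.mul_left (x + y))).add (h₂.hasSum.mul_left (x * y))

namespace basicHypergeometric

variable (q a b c : ℂ)

noncomputable def coeff (n : ℕ) : ℂ :=
  qPoch q a n * qPoch q b n / (qPoch q c n * qPoch q q n)

lemma eq_tsum (z : ℂ) : basicHypergeometric q a b c z = ∑' n, coeff q a b c n * z ^ n := rfl

-- No side conditions: `x / (y * w) = x / y / w` holds in a field even when `y` or `w` is zero.
lemma coeff_succ (n : ℕ) :
    coeff q a b c (n + 1) = coeff q a b c n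
      * ((1 - a * q ^ n) * (1 - b * q ^ n) / ((1 - c * q ^ n) * (1 - q * q ^ n))) := by
  simp only [coeff, qPoch_succ, div_mul_div_comm]
  ring_nf

lemma coeff_succ_mul {n : ℕ} (hq : ‖q‖ < 1) (hc : c * q ^ n ≠ 1) :
    coeff q a b c (n + 1) * ((1 - c * q ^ n) * (1 - q * q ^ n))
      = coeff q a b c n * ((1 - a * q ^ n) * (1 - b * q ^ n)) := by
  have hq' : 1 - q * q ^ n ≠ 0 := by
    refine sub_ne_zero.2 fun h => ?_
    have : ‖q * q ^ n‖ < 1 := by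
      rw [← pow_succ', norm_pow]
      exact pow_lt_one₀ (norm_nonneg q) hq n.succ_ne_zero
    simp [← h] at this
  have hc' : 1 - c * q ^ n ≠ 0 := sub_ne_zero.2 hc.symm
  rw [coeff_succ, mul_assoc, div_mul_cancel₀ _ (mul_ne_zero hc' hq')]

lemma summable {w : ℂ} (hq : ‖q‖ < 1) (hw : ‖w‖ < 1) :
    Summable fun n => coeff q a b c n * w ^ n := by
  set r : ℂ → ℂ := fun x => (1 - a * x) * (1 - b * x) / ((1 - c * x) * (1 - q * x))
  have hr : Tendsto (fun n => ‖w * r (q ^ n)‖) atTop (𝓝 ‖w‖) := by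
    have hr0 : ContinuousAt r 0 := ContinuousAt.div (by fun_prop) (by fun_prop) (by simp)
    have := (hr0.tendsto.comp (tendsto_pow_atTop_nhds_zero_of_norm_lt_one hq)).const_mul w
    simpa [r] using this.norm
  refine summable_of_ratio_norm_eventually_le (r := (‖w‖ + 1) / 2) (by linarith) ?_
  filter_upwards [hr.eventually_lt_const (u := (‖w‖ + 1) / 2) (by linarith)] with n hn
  calc ‖coeff q a b c (n + 1) * w ^ (n + 1)‖
      = ‖w * r (q ^ n)‖ * ‖coeff q a b c n * w ^ n‖ := by
        rw [coeff_succ, ← norm_mul]; congr 1; ring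
    _ ≤ (‖w‖ + 1) / 2 * ‖coeff q a b c n * w ^ n‖ := by gcongr

lemma q_difference_eq {z : ℂ} (hq₀ : q ≠ 0) (hq : ‖q‖ < 1) (hc : ∀ n : ℕ, c * q ^ n ≠ 1)
    (hz : ‖z‖ < 1) :
    basicHypergeometric q a b c z - (1 + c / q) * basicHypergeometric q a b c (q * z)
        + c / q * basicHypergeometric q a b c (q ^ 2 * z)
      = z * (basicHypergeometric q a b c z - (a + b) * basicHypergeometric q a b c (q * z)
        + a * b * basicHypergeometric q a b c (q ^ 2 * z)) := by
  have hqz : ‖q * z‖ < 1 := by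
    rw [norm_mul]; nlinarith [norm_nonneg q, norm_nonneg z]
  have hq2z : ‖q ^ 2 * z‖ < 1 := by
    rw [norm_mul, norm_pow]; nlinarith [norm_nonneg q, norm_nonneg z]
  have h₀ := summable q a b c hq hz
  have h₁ := summable q a b c hq hqz
  have h₂ := summable q a b c hq hq2z
  have hL := hasSum_mul_one_sub_mul_one_sub (coeff q a b c) q 1 (c / q) z h₀ h₁ h₂
  have hR := (hasSum_mul_one_sub_mul_one_sub (coeff q a b c) q a b z h₀ h₁ h₂).mul_left z
  rw [one_mul] at hL
  simp only [eq_tsum]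
  refine hL.unique ((hasSum_nat_add_iff' 1).mp ?_)
  have hshift : ∀ n : ℕ, coeff q a b c (n + 1) * ((1 - q ^ (n + 1)) * (1 - c / q * q ^ (n + 1)))
      * z ^ (n + 1) = z * (coeff q a b c n * ((1 - a * q ^ n) * (1 - b * q ^ n)) * z ^ n) := by
    intro n
    have hcq : c / q * q ^ (n + 1) = c * q ^ n := by field_simp; ring
    rw [hcq, pow_succ' q]
    linear_combination z ^ (n + 1) * coeff_succ_mul q a b c hq (hc n)
  simpa [hshift] using hR

end basicHypergeometric

theorem basic_hypergeometric_series_solves_basic_hypergeometric_equation_general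
    (q : ℂ) (hq0 : 0 < ‖q‖) (hq1 : ‖q‖ < 1)
    (a b c : ℂ)
    (hc : ∀ n : ℕ, c * q ^ n ≠ 1)
    (z : ℂ) (hz : ‖z‖ < 1) (hz' : a * b * z ≠ c / q) :
    basicHypergeometric q a b c (q ^ 2 * z)
      - ((a + b) * z - (1 + c / q)) / (a * b * z - c / q) * basicHypergeometric q a b c (q * z)
      + (z - 1) / (a * b * z - c / q) * basicHypergeometric q a b c z = 0 := by
  have hq₀ : q ≠ 0 := norm_pos_iff.1 hq0
  have hD : a * b * z - c / q ≠ 0 := sub_ne_zero.2 hz'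
  have key := basicHypergeometric.q_difference_eq q a b c hq₀ hq1 hc hz
  have hnum : basicHypergeometric q a b c (q ^ 2 * z) * (a * b * z - c / q)
      - ((a + b) * z - (1 + c / q)) * basicHypergeometric q a b c (q * z)
      + (z - 1) * basicHypergeometric q a b c z = 0 := by
    linear_combination -key
  rw [div_mul_eq_mul_div, div_mul_eq_mul_div, sub_div' hD, ← add_div, hnum, zero_div]

/-- `₂φ₁(a,b;c;q;·)` satisfies the basic hypergeometric equation with parameters `(a,b,c)`. -/
theorem basic_hypergeometric_series_solves_basic_hypergeometric_equation
    (q : ℂ) (hq0 : 0 < ‖q‖) (hq1 : ‖q‖ < 1)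
    (a b c : ℂ) (ha : a ≠ 0) (hb : b ≠ 0) (hc0 : c ≠ 0)
    (hc : ∀ n : ℕ, c * q ^ n ≠ 1)
    (z : ℂ) (hz : ‖z‖ < 1) (hz' : a * b * z ≠ c / q) :
    basicHypergeometric q a b c (q ^ 2 * z)
      - ((a + b) * z - (1 + c / q)) / (a * b * z - c / q) * basicHypergeometric q a b c (q * z)
      + (z - 1) / (a * b * z - c / q) * basicHypergeometric q a b c z = 0 :=
  basic_hypergeometric_series_solves_basic_hypergeometric_equation_general q hq0 hq1 a b c hc z hz
    hz'
end

section
/- Let q ∈ ℂ with 0 < |q| < 1 and let θ_q be the Jacobi theta function. Then the set of zeros of θ_q in ℂ∖{0} is exactly the discrete logarithmic spiral q^ℤ = {qⁿ : n ∈ ℤ}, and every such zero is simple (i.e., θ_q(qⁿ) = 0 and θ_q'(qⁿ) ≠ 0 for every n ∈ ℤ, and θ_q(z) ≠ 0 for z ∉ q^ℤ). -/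
/-- The infinite q-Pochhammer symbol `(x; q)_∞ = ∏_{k=0}^{∞} (1 - x qᵏ)`. -/
noncomputable def qPochInf (q x : ℂ) : ℂ :=
  ∏' k : ℕ, (1 - x * q ^ k)

/-- The Jacobi theta function `θ_q(z) = (q;q)_∞ (z;q)_∞ (q/z;q)_∞`. -/
noncomputable def thetaQ (q z : ℂ) : ℂ :=
  qPochInf q q * qPochInf q z * qPochInf q (q / z)

/-! The product `(x;q)_∞` converges locally uniformly, so it is entire, and a convergent product
of nonzero factors is nonzero: `(x;q)_∞` vanishes exactly when some factor `1 - x qᵏ` does.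
Since `|q| < 1`, no positive power of `q` equals `1`, so at most one factor vanishes and the
zeros `x = q⁻ᵏ` are simple. Hence the factor `(z;q)_∞` of `θ_q` produces the simple zeros
`q⁻ᵏ` (`k ≥ 0`), the factor `(q/z;q)_∞` produces the zeros `qᵏ⁺¹`, and these are simple too
because `θ_q(q/z) = θ_q(z)`. -/

open Finset

theorem deriv_mul_of_eq_zero {𝕜 : Type*} [NontriviallyNormedField 𝕜] {f g : 𝕜 → 𝕜} {x : 𝕜}
    (hf : DifferentiableAt 𝕜 f x) (hg : DifferentiableAt 𝕜 g x) (hfx : f x = 0) :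
    deriv (fun y => f y * g y) x = deriv f x * g x := by
  simp [deriv_fun_mul hf hg, hfx]

theorem exists_eq_zpow_iff {K : Type*} [Field K] {q z : K} (hq : q ≠ 0) (hz : z ≠ 0) :
    (∃ n : ℤ, z = q ^ n) ↔ (∃ k : ℕ, z * q ^ k = 1) ∨ ∃ k : ℕ, q / z * q ^ k = 1 := by
  constructor
  · rintro ⟨n, rfl⟩
    rcases le_or_gt n 0 with hn | hn
    · obtain ⟨k, rfl⟩ : ∃ k : ℕ, n = -k := ⟨(-n).toNat, by omega⟩
      exact .inl ⟨k, by rw [zpow_neg, zpow_natCast, inv_mul_cancel₀ (pow_ne_zero k hq)]⟩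
    · obtain ⟨k, rfl⟩ : ∃ k : ℕ, n = k + 1 := ⟨(n - 1).toNat, by omega⟩
      refine .inr ⟨k, ?_⟩
      rw [zpow_add_one₀ hq, zpow_natCast]
      field_simp
  · rintro (⟨k, hk⟩ | ⟨k, hk⟩)
    · exact ⟨-k, by rw [zpow_neg, zpow_natCast, eq_inv_of_mul_eq_one_left hk]⟩
    · refine ⟨k + 1, ?_⟩
      rw [zpow_add_one₀ hq, zpow_natCast]
      field_simp at hk
      linear_combination -hk

namespace qPochInf

variable {q x : ℂ}

theorem summable_norm_mul_pow (hq1 : ‖q‖ < 1) (x : ℂ) : Summable fun k : ℕ => ‖x * q ^ k‖ := by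
  simpa [norm_mul, norm_pow] using (summable_geometric_of_lt_one (norm_nonneg q) hq1).mul_left ‖x‖

theorem multipliable (hq1 : ‖q‖ < 1) (x : ℂ) : Multipliable fun k : ℕ => 1 - x * q ^ k := by
  simpa [sub_eq_add_neg] using
    multipliable_one_add_of_summable (f := fun k : ℕ => -(x * q ^ k))
      (by simpa using summable_norm_mul_pow hq1 x)

theorem eq_zero_iff (hq1 : ‖q‖ < 1) : qPochInf q x = 0 ↔ ∃ k : ℕ, x * q ^ k = 1 := by
  constructor
  · intro h
    by_contra! hx
    refine tprod_one_add_ne_zero_of_summable (f := fun k : ℕ => -(x * q ^ k)) (fun k => ?_)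
      (by simpa using summable_norm_mul_pow hq1 x) (by simpa [qPochInf, sub_eq_add_neg] using h)
    simpa [← sub_eq_add_neg, sub_eq_zero] using (hx k).symm
  · rintro ⟨k, hk⟩
    exact tprod_of_exists_eq_zero ⟨k, by simp [hk]⟩

theorem eq_prod_range_mul (hq1 : ‖q‖ < 1) (x : ℂ) (m : ℕ) :
    qPochInf q x = (∏ k ∈ range m, (1 - x * q ^ k)) * qPochInf q (x * q ^ m) := by
  have hshift : (fun k : ℕ => 1 - x * q ^ (k + m)) = fun k => 1 - x * q ^ m * q ^ k := by
    ext k; ring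
  have := Multipliable.prod_mul_tprod_nat_mul' (f := fun k : ℕ => 1 - x * q ^ k) (k := m)
    (by rw [hshift]; exact multipliable hq1 _)
  rw [qPochInf, qPochInf, ← this, hshift]

theorem differentiable (hq1 : ‖q‖ < 1) : Differentiable ℂ (qPochInf q) := by
  intro x
  have hgeom := (summable_geometric_of_lt_one (norm_nonneg q) hq1).mul_left (‖x‖ + 1)
  have hprod : HasProdLocallyUniformlyOn (fun k y => 1 + -(y * q ^ k))
      (fun y => ∏' k, (1 + -(y * q ^ k))) (Metric.ball 0 (‖x‖ + 1)) :=
    hgeom.hasProdLocallyUniformlyOn_nat_one_add (f := fun k y => -(y * q ^ k))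
      Metric.isOpen_ball (.of_forall fun k y hy => ?_) (fun k => by fun_prop)
  · have := hprod.differentiableOn (.of_forall fun s => by fun_prop) Metric.isOpen_ball
    simp only [← sub_eq_add_neg] at this
    exact this.differentiableAt (Metric.isOpen_ball.mem_nhds (by simp))
  · rw [mem_ball_zero_iff] at hy
    simp only [norm_neg, norm_mul, norm_pow]
    gcongr

theorem eq_of_mul_pow_eq_one (hq1 : ‖q‖ < 1) {j k : ℕ} (hj : x * q ^ j = 1)
    (hk : x * q ^ k = 1) : j = k := by
  wlog hjk : j ≤ k generalizing j k
  · exact (this hk hj (le_of_not_ge hjk)).symm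
  obtain ⟨d, rfl⟩ := Nat.exists_eq_add_of_le hjk
  have hd : ‖q‖ ^ d = 1 := by
    rw [← norm_pow, ← one_mul (q ^ d), ← hj, mul_assoc, ← pow_add, hk, norm_one]
  by_contra hne
  exact (pow_lt_one₀ (norm_nonneg q) hq1 (by omega)).ne hd

theorem pow_succ_ne_zero (hq1 : ‖q‖ < 1) (j : ℕ) : qPochInf q (q ^ (j + 1)) ≠ 0 := by
  rw [Ne, eq_zero_iff hq1]
  rintro ⟨k, hk⟩
  rw [← pow_add, ← one_mul (q ^ _)] at hk
  exact absurd (eq_of_mul_pow_eq_one hq1 hk (by simp : 1 * q ^ 0 = 1)) (by omega)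

theorem self_ne_zero (hq1 : ‖q‖ < 1) : qPochInf q q ≠ 0 := by
  simpa using pow_succ_ne_zero hq1 0

theorem deriv_ne_zero (hq1 : ‖q‖ < 1) {m : ℕ} (hx : x * q ^ m = 1) :
    deriv (qPochInf q) x ≠ 0 := by
  set R : ℂ → ℂ := fun y => (∏ k ∈ range m, (1 - y * q ^ k)) * qPochInf q (y * q ^ (m + 1))
  have hfactor : qPochInf q = fun y => (1 - y * q ^ m) * R y := by
    ext y
    rw [eq_prod_range_mul hq1 y (m + 1), prod_range_succ]
    ring
  have hR : R x ≠ 0 := by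
    refine mul_ne_zero (prod_ne_zero_iff.2 fun k hk => sub_ne_zero.2 fun h => ?_) ?_
    · exact (mem_range.1 hk).ne (eq_of_mul_pow_eq_one hq1 h.symm hx)
    · rw [pow_succ, ← mul_assoc, hx, one_mul]
      exact self_ne_zero hq1
  have hP := differentiable hq1
  rw [hfactor, deriv_mul_of_eq_zero (by fun_prop) (by fun_prop) (by rw [hx, sub_self])]
  have hderiv : deriv (fun y => 1 - y * q ^ m) x = -q ^ m := by simp
  rw [hderiv]
  exact mul_ne_zero (neg_ne_zero.2 (right_ne_zero_of_mul_eq_one hx)) hR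

end qPochInf

namespace thetaQ

variable {q z : ℂ}

theorem apply_div (hq : q ≠ 0) (z : ℂ) : thetaQ q (q / z) = thetaQ q z := by
  rw [thetaQ, thetaQ, div_div_cancel₀ hq]
  ring

theorem differentiableAt (hq1 : ‖q‖ < 1) (hz : z ≠ 0) : DifferentiableAt ℂ (thetaQ q) z := by
  have hP := qPochInf.differentiable hq1
  unfold thetaQ
  fun_prop (disch := exact hz)

theorem eq_zero_iff (hq : q ≠ 0) (hq1 : ‖q‖ < 1) (hz : z ≠ 0) :
    thetaQ q z = 0 ↔ ∃ n : ℤ, z = q ^ n := by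
  rw [thetaQ, mul_eq_zero, mul_eq_zero, or_iff_right (qPochInf.self_ne_zero hq1),
    qPochInf.eq_zero_iff hq1, qPochInf.eq_zero_iff hq1, exists_eq_zpow_iff hq hz]

theorem deriv_ne_zero_of_mul_pow_eq_one (hq1 : ‖q‖ < 1) {m : ℕ} (hz : z * q ^ m = 1) :
    deriv (thetaQ q) z ≠ 0 := by
  have hP := qPochInf.differentiable hq1
  have hz0 : z ≠ 0 := left_ne_zero_of_mul_eq_one hz
  have hθ : thetaQ q = fun y => (qPochInf q q * qPochInf q y) * qPochInf q (q / y) := rfl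
  rw [hθ, deriv_mul_of_eq_zero (by fun_prop) (by fun_prop (disch := exact hz0))
    (by rw [qPochInf.eq_zero_iff hq1 |>.2 ⟨m, hz⟩, mul_zero])]
  have hqz : q / z = q ^ (m + 1) := by
    rw [div_eq_iff hz0]
    linear_combination (-q) * hz
  rw [deriv_const_mul _ (hP z), hqz]
  exact mul_ne_zero (mul_ne_zero (qPochInf.self_ne_zero hq1) (qPochInf.deriv_ne_zero hq1 hz))
    (qPochInf.pow_succ_ne_zero hq1 m)

theorem deriv_apply_div (hq : q ≠ 0) (hq1 : ‖q‖ < 1) (hz : z ≠ 0) :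
    deriv (thetaQ q) (q / z) = -(z ^ 2 / q) * deriv (thetaQ q) z := by
  have hsymm : thetaQ q = thetaQ q ∘ (q / ·) := funext fun w => (apply_div hq w).symm
  have hqz : q / z ≠ 0 := div_ne_zero hq hz
  conv_lhs => rw [hsymm]
  rw [deriv_comp _ (by rw [div_div_cancel₀ hq]; exact differentiableAt hq1 hz)
    (by fun_prop (disch := exact hqz)), deriv_const_div_id,
    div_div_cancel₀ hq]
  field_simp

theorem deriv_zpow_ne_zero (hq : q ≠ 0) (hq1 : ‖q‖ < 1) (n : ℤ) :
    deriv (thetaQ q) (q ^ n) ≠ 0 := by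
  have hneg (m : ℕ) : deriv (thetaQ q) (q ^ (-m : ℤ)) ≠ 0 :=
    deriv_ne_zero_of_mul_pow_eq_one hq1
      (by rw [zpow_neg, zpow_natCast, inv_mul_cancel₀ (pow_ne_zero m hq)])
  rcases le_or_gt n 0 with hn | hn
  · obtain ⟨m, rfl⟩ : ∃ m : ℕ, n = -m := ⟨(-n).toNat, by omega⟩
    exact hneg m
  · obtain ⟨m, rfl⟩ : ∃ m : ℕ, n = 1 - -m := ⟨(n - 1).toNat, by omega⟩
    rw [zpow_sub₀ hq, zpow_one, deriv_apply_div hq hq1 (zpow_ne_zero _ hq)]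
    exact mul_ne_zero (by simp [hq]) (hneg m)

end thetaQ

/-- The zeros of `θ_q` in `ℂ ∖ {0}` are exactly the points of the logarithmic spiral
`q^ℤ`, and each of these zeros is simple. -/
theorem thetaQ_zeros
    (q : ℂ) (hq0 : 0 < ‖q‖) (hq1 : ‖q‖ < 1) :
    (∀ n : ℤ, thetaQ q (q ^ n) = 0 ∧ deriv (thetaQ q) (q ^ n) ≠ 0) ∧
      (∀ z : ℂ, z ≠ 0 → (∀ n : ℤ, z ≠ q ^ n) → thetaQ q z ≠ 0) := by
  have hq : q ≠ 0 := norm_pos_iff.mp hq0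
  refine ⟨fun n => ⟨?_, thetaQ.deriv_zpow_ne_zero hq hq1 n⟩, fun z hz hzn hθ => ?_⟩
  · exact (thetaQ.eq_zero_iff hq hq1 (zpow_ne_zero n hq)).2 ⟨n, rfl⟩
  · obtain ⟨n, rfl⟩ := (thetaQ.eq_zero_iff hq hq1 hz).1 hθ
    exact hzn n rfl
end

section
/- Let q ∈ ℂ with 0 < |q| < 1, fix σ ∈ ℂ with σ² = q, let a ∈ ℂ∖{0}, and let h be the holomorphic branch of the square root on the slit plane U = ℂ∖[0,∞) given by h(z) = exp((1/2)·Log z) for a fixed branch Log of the logarithm on U. Suppose A, B, C, D ∈ ℂ and n, m, l, k, N, M, L, K ∈ ℤ satisfy A·h(z)ⁿ·θ_q(q^N a z) + B·h(z)^m·θ_q(−q^M a z) + C·h(z)^l·θ_q(σ q^L a z) + D·h(z)^k·θ_q(−σ q^K a z) = 0 for all z ∈ U. Then A = B = C = D = 0. -/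
/-- The slit plane `U = ℂ ∖ [0,∞)`. -/
def slitPlane' : Set ℂ := {z : ℂ | ¬ (0 ≤ z.re ∧ z.im = 0)}

open Filter Topology

section QPochhammer

variable {q : ℂ}

lemma summable_norm_neg_mul_pow (hq : ‖q‖ < 1) (x : ℂ) :
    Summable fun k : ℕ ↦ ‖-(x * q ^ k)‖ := by
  simpa using (summable_geometric_of_lt_one (norm_nonneg q) hq).mul_left ‖x‖

lemma multipliable_one_sub_mul_pow (hq : ‖q‖ < 1) (x : ℂ) :
    Multipliable fun k : ℕ ↦ 1 - x * q ^ k := by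
  simpa [sub_eq_add_neg] using multipliable_one_add_of_summable (summable_norm_neg_mul_pow hq x)

lemma qPochInf_eq_one_sub_mul (hq : ‖q‖ < 1) (x : ℂ) :
    qPochInf q x = (1 - x) * qPochInf q (q * x) := by
  have hmul : Multipliable fun k : ℕ ↦ 1 - x * q ^ (k + 1) := by
    convert multipliable_one_sub_mul_pow hq (q * x) using 2 with k
    ring
  unfold qPochInf
  rw [tprod_eq_zero_mul' (f := fun k ↦ 1 - x * q ^ k) hmul, pow_zero, mul_one]
  exact congrArg _ (tprod_congr fun k ↦ by ring)

lemma qPochInf_one (hq : ‖q‖ < 1) : qPochInf q 1 = 0 := by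
  simp [qPochInf_eq_one_sub_mul hq 1]

lemma qPochInf_ne_zero (hq : ‖q‖ < 1) {x : ℂ} (hx : ∀ k : ℕ, x * q ^ k ≠ 1) :
    qPochInf q x ≠ 0 := by
  simpa [qPochInf, sub_eq_add_neg] using tprod_one_add_ne_zero_of_summable
    (fun k ↦ by simpa [← sub_eq_add_neg, sub_eq_zero] using (hx k).symm)
    (summable_norm_neg_mul_pow hq x)

lemma differentiable_qPochInf (hq : ‖q‖ < 1) : Differentiable ℂ (qPochInf q) := by
  intro x
  have hball : DifferentiableOn ℂ (fun y ↦ ∏' k : ℕ, (1 - y * q ^ k))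
      (Metric.ball 0 (‖x‖ + 1)) := by
    have hprod := Summable.hasProdLocallyUniformlyOn_nat_one_add (f := fun k y ↦ -(y * q ^ k))
      (K := Metric.ball 0 (‖x‖ + 1)) Metric.isOpen_ball
      ((summable_geometric_of_lt_one (norm_nonneg q) hq).mul_left (‖x‖ + 1))
      (.of_forall fun k y hy ↦ ?_) (fun k ↦ by fun_prop)
    · simpa [← sub_eq_add_neg] using hprod.differentiableOn (.of_forall fun s ↦ by
        simpa [Finset.prod_fn] using DifferentiableOn.finsetProd fun k _ ↦ by fun_prop)
        Metric.isOpen_ball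
    · rw [norm_neg, norm_mul, norm_pow]
      exact mul_le_mul_of_nonneg_right (mem_ball_zero_iff.mp hy).le (by positivity)
  exact hball.differentiableAt (Metric.isOpen_ball.mem_nhds (by simp))

end QPochhammer

section Theta

variable {q : ℂ}

lemma thetaQ_q_mul (hq0 : q ≠ 0) (hq : ‖q‖ < 1) {z : ℂ} (hz : z ≠ 0) :
    thetaQ q (q * z) = -z⁻¹ * thetaQ q z := by
  have hinv : qPochInf q z⁻¹ = (1 - z⁻¹) * qPochInf q (q / z) := by
    rw [qPochInf_eq_one_sub_mul hq, div_eq_mul_inv]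
  rw [thetaQ, thetaQ, qPochInf_eq_one_sub_mul hq z, show q / (q * z) = z⁻¹ by field_simp, hinv]
  field_simp
  ring

lemma thetaQ_one (hq : ‖q‖ < 1) : thetaQ q 1 = 0 := by
  simp [thetaQ, qPochInf_one hq]

lemma thetaQ_ne_zero (hq0 : q ≠ 0) (hq : ‖q‖ < 1) {x : ℂ} (hx : ∀ j : ℤ, x ≠ q ^ j) :
    thetaQ q x ≠ 0 := by
  refine mul_ne_zero (mul_ne_zero (qPochInf_ne_zero hq fun k hk ↦ ?_)
    (qPochInf_ne_zero hq fun k hk ↦ hx (-k) ?_)) (qPochInf_ne_zero hq fun k hk ↦ hx (k + 1) ?_)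
  · have hnorm := congrArg norm hk
    rw [norm_mul, norm_pow, ← pow_succ', norm_one] at hnorm
    exact (pow_lt_one₀ (norm_nonneg q) hq (Nat.succ_ne_zero k)).ne hnorm
  · rw [zpow_neg, zpow_natCast]
    exact eq_inv_of_mul_eq_one_left hk
  · have hx0 : x ≠ 0 := by rintro rfl; simp at hk
    rw [zpow_add_one₀ hq0, zpow_natCast]
    field_simp at hk
    linear_combination -hk

lemma differentiableAt_thetaQ (hq : ‖q‖ < 1) {z : ℂ} (hz : z ≠ 0) :
    DifferentiableAt ℂ (thetaQ q) z := by
  have hP := differentiable_qPochInf hq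
  exact ((differentiableAt_const _).mul (hP z)).mul
    ((hP _).comp z ((differentiableAt_const q).div differentiableAt_id hz))

end Theta

section NormNeOne

variable {𝕜 : Type*} [NormedField 𝕜] {σ : 𝕜}

lemma zpow_right_injective_of_norm_ne_one (hσ0 : σ ≠ 0) (hσ1 : ‖σ‖ ≠ 1) :
    Function.Injective (σ ^ · : ℤ → 𝕜) := fun X Y hXY ↦
  zpow_right_injective₀ (norm_pos_iff.mpr hσ0) hσ1 (by simpa using congrArg norm hXY)

lemma zpow_ne_neg_zpow [CharZero 𝕜] (hσ0 : σ ≠ 0) (hσ1 : ‖σ‖ ≠ 1) (X Y : ℤ) :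
    σ ^ X ≠ -σ ^ Y := by
  intro h
  obtain rfl : X = Y :=
    zpow_right_injective₀ (norm_pos_iff.mpr hσ0) hσ1 (by simpa using congrArg norm h)
  exact zpow_ne_zero X hσ0 (by linear_combination h / 2)

end NormNeOne

section SquareRoot

variable {q σ : ℂ}

lemma ne_zero_of_sq_eq (hσ : σ ^ 2 = q) (hq0 : q ≠ 0) : σ ≠ 0 := by
  rintro rfl
  exact hq0 (by simp [← hσ])

lemma norm_lt_one_of_sq_eq (hσ : σ ^ 2 = q) (hq : ‖q‖ < 1) : ‖σ‖ < 1 := by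
  rw [← hσ, norm_pow] at hq
  exact (sq_lt_one_iff₀ (norm_nonneg σ)).mp hq

lemma zpow_eq_zpow_two_mul (hσ : σ ^ 2 = q) (N : ℤ) : q ^ N = σ ^ (2 * N) := by
  rw [zpow_mul, ← hσ, zpow_ofNat]

lemma thetaQ_zpow_ne_zero_of_odd (hσ : σ ^ 2 = q) (hq0 : q ≠ 0) (hq : ‖q‖ < 1) {d : ℤ}
    (hd : Odd d) : thetaQ q (σ ^ d) ≠ 0 := by
  refine thetaQ_ne_zero hq0 hq fun j hj ↦ ?_
  rw [zpow_eq_zpow_two_mul hσ] at hj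
  have := zpow_right_injective_of_norm_ne_one (ne_zero_of_sq_eq hσ hq0)
    (norm_lt_one_of_sq_eq hσ hq).ne hj
  exact Int.not_even_iff_odd.mpr hd ⟨j, by omega⟩

end SquareRoot

section ShiftInvariantRelation

open Polynomial

variable {α ι : Type*} [Fintype ι] {S : Set α} {s : α → α} {c : α → ℂ} {T : ι → α → ℂ}
  {μ : ι → ℂ}

lemma sum_pow_mul_eq_zero_of_shift (hs : Set.MapsTo s S S) (hc : ∀ x ∈ S, c x ≠ 0)
    (hT : ∀ i, ∀ x ∈ S, T i (s x) = c x * μ i * T i x) (h0 : ∀ x ∈ S, ∑ i, T i x = 0) (j : ℕ) :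
    ∀ x ∈ S, ∑ i, μ i ^ j * T i x = 0 := by
  induction j with
  | zero => simpa using h0
  | succ j ih =>
    intro x hx
    have hsx := ih (s x) (hs hx)
    simp only [hT _ x hx] at hsx
    refine (mul_eq_zero.mp ?_).resolve_left (hc x hx)
    rw [Finset.mul_sum, ← hsx]
    exact Finset.sum_congr rfl fun i _ ↦ by ring

lemma sum_eval_mul_eq_zero_of_shift (hs : Set.MapsTo s S S) (hc : ∀ x ∈ S, c x ≠ 0)
    (hT : ∀ i, ∀ x ∈ S, T i (s x) = c x * μ i * T i x) (h0 : ∀ x ∈ S, ∑ i, T i x = 0)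
    (p : ℂ[X]) : ∀ x ∈ S, ∑ i, p.eval (μ i) * T i x = 0 := by
  intro x hx
  induction p using Polynomial.induction_on' with
  | add p r hp hr => simp [add_mul, Finset.sum_add_distrib, hp, hr]
  | monomial j a =>
    simp [mul_assoc, ← Finset.mul_sum, sum_pow_mul_eq_zero_of_shift hs hc hT h0 j x hx]

end ShiftInvariantRelation

lemma eqOn_zero_of_comp_sqrt_eq_zero {F r : ℂ → ℂ} {U : Set ℂ} {z₀ : ℂ}
    (hF : DifferentiableOn ℂ F {0}ᶜ) (hU : U ∈ 𝓝 z₀) (hz₀ : z₀ ≠ 0) (hr : ContinuousAt r z₀)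
    (hsq : ∀ z ∈ U, r z ^ 2 = z) (hFr : ∀ z ∈ U, F (r z) = 0) : Set.EqOn F 0 {0}ᶜ := by
  have hr₀ : r z₀ ≠ 0 := by
    intro h0
    exact hz₀ (by simpa [h0] using (hsq z₀ (mem_of_mem_nhds hU)).symm)
  have hr_punctured : Tendsto r (𝓝[≠] z₀) (𝓝[≠] r z₀) := by
    refine tendsto_nhdsWithin_of_tendsto_nhds_of_eventually_within _
      (hr.tendsto.mono_left nhdsWithin_le_nhds) ?_
    filter_upwards [nhdsWithin_le_nhds hU, self_mem_nhdsWithin] with z hz hne heq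
    rw [Set.mem_singleton_iff] at heq
    exact hne (by rw [Set.mem_singleton_iff, ← hsq z hz, ← hsq z₀ (mem_of_mem_nhds hU), heq])
  have hfreq : ∃ᶠ w in 𝓝[≠] r z₀, F w = 0 :=
    hr_punctured.frequently (Eventually.frequently
      (by filter_upwards [nhdsWithin_le_nhds hU] with z hz using hFr z hz))
  exact (hF.analyticOnNhd isOpen_compl_singleton).eqOn_zero_of_preconnected_of_frequently_eq_zero
    (isConnected_compl_singleton_of_one_lt_rank (by simp) 0).isPreconnected hr₀ hfreq

/-- `thetaMonomial q c e b w` is the paper's `c z^{e/2} θ_q(b z)` at `z = w²`. -/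
noncomputable def thetaMonomial (q c : ℂ) (e : ℤ) (b w : ℂ) : ℂ :=
  c * w ^ e * thetaQ q (b * w ^ 2)

section ThetaMonomial

variable {q σ : ℂ}

lemma differentiableOn_thetaMonomial (hq : ‖q‖ < 1) (c : ℂ) (e : ℤ) {b : ℂ} (hb : b ≠ 0) :
    DifferentiableOn ℂ (thetaMonomial q c e b) {0}ᶜ := by
  intro w hw
  have hw : w ≠ 0 := hw
  have hθ : DifferentiableAt ℂ (fun w ↦ thetaQ q (b * w ^ 2)) w :=
    (differentiableAt_thetaQ hq (by positivity)).comp w (by fun_prop)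
  exact (((differentiableAt_const c).mul (differentiableAt_zpow.mpr (.inl hw))).mul
    hθ).differentiableWithinAt

lemma thetaMonomial_sqrt_mul (hσ : σ ^ 2 = q) (hq0 : q ≠ 0) (hq : ‖q‖ < 1) (c : ℂ) (e d : ℤ)
    {b w : ℂ} (hb : b ≠ 0) (hw : w ≠ 0) :
    thetaMonomial q c e (σ ^ d * b) (σ * w)
      = (w ^ 2)⁻¹ * (-σ ^ (e - d) / b) * thetaMonomial q c e (σ ^ d * b) w := by
  have hσ0 := ne_zero_of_sq_eq hσ hq0
  have hx : σ ^ d * b * w ^ 2 ≠ 0 := by positivity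
  rw [thetaMonomial, thetaMonomial, mul_pow, hσ,
    show σ ^ d * b * (q * w ^ 2) = q * (σ ^ d * b * w ^ 2) by ring, thetaQ_q_mul hq0 hq hx,
    mul_zpow, zpow_sub₀ hσ0]
  field_simp

lemma eq_zero_of_forall_add_thetaMonomial_eq_zero (hσ : σ ^ 2 = q) (hq0 : q ≠ 0)
    (hq : ‖q‖ < 1) {α β c₁ c₂ b : ℂ} {e₁ e₂ d₁ d₂ : ℤ} (hβ : β ≠ 0) (hb : b ≠ 0)
    (hd : Odd (d₂ - d₁))
    (h : ∀ w ≠ 0, α * thetaMonomial q c₁ e₁ (σ ^ d₁ * b) w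
      + β * thetaMonomial q c₂ e₂ (σ ^ d₂ * b) w = 0) : c₂ = 0 := by
  have hσ0 := ne_zero_of_sq_eq hσ hq0
  obtain ⟨w, hw⟩ := IsAlgClosed.exists_pow_nat_eq (σ ^ d₁ * b)⁻¹ two_pos
  have hw0 : w ≠ 0 := by
    rintro rfl
    simp [hb, zpow_ne_zero d₁ hσ0] at hw
  have hzero : σ ^ d₁ * b * w ^ 2 = 1 := by rw [hw]; field_simp
  have hodd : σ ^ d₂ * b * w ^ 2 = σ ^ (d₂ - d₁) := by rw [hw, zpow_sub₀ hσ0]; field_simp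
  have := h w hw0
  rw [thetaMonomial, thetaMonomial, hzero, hodd, thetaQ_one hq] at this
  simpa [hβ, zpow_ne_zero e₂ hw0, thetaQ_zpow_ne_zero_of_odd hσ hq0 hq hd] using this

lemma eq_zero_and_eq_zero_of_forall_add_thetaMonomial_eq_zero (hσ : σ ^ 2 = q) (hq0 : q ≠ 0)
    (hq : ‖q‖ < 1) {α β c₁ c₂ b : ℂ} {e₁ e₂ d₁ d₂ : ℤ} (hα : α ≠ 0) (hβ : β ≠ 0) (hb : b ≠ 0)
    (hd : Odd (d₁ - d₂))
    (h : ∀ w ≠ 0, α * thetaMonomial q c₁ e₁ (σ ^ d₁ * b) w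
      + β * thetaMonomial q c₂ e₂ (σ ^ d₂ * b) w = 0) : c₁ = 0 ∧ c₂ = 0 :=
  ⟨eq_zero_of_forall_add_thetaMonomial_eq_zero hσ hq0 hq hα hb hd
      fun w hw ↦ by rw [add_comm]; exact h w hw,
    eq_zero_of_forall_add_thetaMonomial_eq_zero hσ hq0 hq hβ hb (by simpa using hd.neg) h⟩

lemma neg_zpow_div_ne_neg_zpow_div_neg (hσ : σ ^ 2 = q) (hq0 : q ≠ 0) (hq : ‖q‖ < 1)
    {a : ℂ} (ha : a ≠ 0) (X Y : ℤ) : -σ ^ X / a ≠ -σ ^ Y / -a := by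
  intro hXY
  rw [div_neg, ← neg_div, div_left_inj' ha, neg_neg] at hXY
  exact zpow_ne_neg_zpow (ne_zero_of_sq_eq hσ hq0) (norm_lt_one_of_sq_eq hσ hq).ne Y X hXY.symm

open Polynomial in
lemma eq_zero_of_eqOn_thetaMonomial_sum (hσ : σ ^ 2 = q) (hq0 : q ≠ 0) (hq : ‖q‖ < 1)
    {a A B C D : ℂ} (ha : a ≠ 0) {n m l k N M L K : ℤ}
    (h : Set.EqOn (thetaMonomial q A n (σ ^ (2 * N) * a) + thetaMonomial q B m (σ ^ (2 * M) * -a)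
      + thetaMonomial q C l (σ ^ (2 * L + 1) * a) + thetaMonomial q D k (σ ^ (2 * K + 1) * -a))
      0 {0}ᶜ) :
    A = 0 ∧ B = 0 ∧ C = 0 ∧ D = 0 := by
  have hσ0 := ne_zero_of_sq_eq hσ hq0
  set T : Fin 4 → ℂ → ℂ := ![thetaMonomial q A n (σ ^ (2 * N) * a),
    thetaMonomial q B m (σ ^ (2 * M) * -a), thetaMonomial q C l (σ ^ (2 * L + 1) * a),
    thetaMonomial q D k (σ ^ (2 * K + 1) * -a)]
  set μ : Fin 4 → ℂ := ![-σ ^ (n - 2 * N) / a, -σ ^ (m - 2 * M) / -a,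
    -σ ^ (l - (2 * L + 1)) / a, -σ ^ (k - (2 * K + 1)) / -a]
  have hshift : ∀ i, ∀ w ∈ ({0}ᶜ : Set ℂ), T i (σ * w) = (w ^ 2)⁻¹ * μ i * T i w := by
    intro i w hw
    fin_cases i <;> exact thetaMonomial_sqrt_mul hσ hq0 hq _ _ _ (by simpa) hw
  have hpoly := sum_eval_mul_eq_zero_of_shift (S := {0}ᶜ) (s := (σ * ·))
    (c := fun w ↦ (w ^ 2)⁻¹) (fun w hw ↦ mul_ne_zero hσ0 hw)
    (fun w hw ↦ inv_ne_zero (pow_ne_zero 2 hw)) hshift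
    (fun w hw ↦ by rw [Fin.sum_univ_four]; exact h hw)
  have hμ := neg_zpow_div_ne_neg_zpow_div_neg hσ hq0 hq ha
  have hAC : ∀ w ≠ 0,
      (μ 0 - μ 1) * (μ 0 - μ 3) * T 0 w + (μ 2 - μ 1) * (μ 2 - μ 3) * T 2 w = 0 := by
    intro w hw
    have := hpoly ((X - Polynomial.C (μ 1)) * (X - Polynomial.C (μ 3))) w hw
    simpa only [Fin.sum_univ_four, eval_mul, eval_sub, eval_X, eval_C, sub_self, zero_mul,
      mul_zero, add_zero] using this
  have hBD : ∀ w ≠ 0,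
      (μ 1 - μ 0) * (μ 1 - μ 2) * T 1 w + (μ 3 - μ 0) * (μ 3 - μ 2) * T 3 w = 0 := by
    intro w hw
    have := hpoly ((X - Polynomial.C (μ 0)) * (X - Polynomial.C (μ 2))) w hw
    simpa only [Fin.sum_univ_four, eval_mul, eval_sub, eval_X, eval_C, sub_self, zero_mul,
      mul_zero, add_zero, zero_add] using this
  obtain ⟨rfl, rfl⟩ := eq_zero_and_eq_zero_of_forall_add_thetaMonomial_eq_zero hσ hq0 hq
    (mul_ne_zero (sub_ne_zero.mpr (hμ _ _)) (sub_ne_zero.mpr (hμ _ _)))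
    (mul_ne_zero (sub_ne_zero.mpr (hμ _ _)) (sub_ne_zero.mpr (hμ _ _))) ha ⟨N - L - 1, by ring⟩ hAC
  obtain ⟨rfl, rfl⟩ := eq_zero_and_eq_zero_of_forall_add_thetaMonomial_eq_zero hσ hq0 hq
    (mul_ne_zero (sub_ne_zero.mpr (hμ _ _).symm) (sub_ne_zero.mpr (hμ _ _).symm))
    (mul_ne_zero (sub_ne_zero.mpr (hμ _ _).symm) (sub_ne_zero.mpr (hμ _ _).symm))
    (neg_ne_zero.mpr ha) ⟨M - K - 1, by ring⟩ hBD
  exact ⟨rfl, rfl, rfl, rfl⟩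

end ThetaMonomial

lemma isOpen_slitPlane' : IsOpen slitPlane' := by
  have : slitPlane' = Neg.neg ⁻¹' Complex.slitPlane := by
    ext z
    simp [slitPlane', Complex.mem_slitPlane_iff, imp_iff_not_or]
  exact this ▸ Complex.isOpen_slitPlane.preimage continuous_neg

lemma sq_exp_half_mul {x z : ℂ} (h : Complex.exp x = z) : Complex.exp (1 / 2 * x) ^ 2 = z := by
  rw [← Complex.exp_nat_mul, ← mul_assoc]
  norm_num
  exact h

/-- Any functional relation
`A z^{n/2} θ_q(q^N a z) + B z^{m/2} θ_q(-q^M a z) + C z^{l/2} θ_q(q^{L+1/2} a z)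
  + D z^{k/2} θ_q(-q^{K+1/2} a z) = 0`
(on the slit plane, for a fixed holomorphic branch `h` of the square root and a fixed
square root `σ` of `q`) is trivial: `A = B = C = D = 0`. -/
theorem thetaQ_half_integer_relations_trivial
    (q : ℂ) (hq0 : 0 < ‖q‖) (hq1 : ‖q‖ < 1)
    (σ : ℂ) (hσ : σ ^ 2 = q)
    (a : ℂ) (ha : a ≠ 0)
    (Log : ℂ → ℂ) (hLog : ∀ z ∈ slitPlane', Complex.exp (Log z) = z)
    (hLogHolo : DifferentiableOn ℂ Log slitPlane')
    (h : ℂ → ℂ) (hh : ∀ z, h z = Complex.exp ((1 / 2 : ℂ) * Log z))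
    (A B C D : ℂ) (n m l k N M L K : ℤ)
    (hrel : ∀ z ∈ slitPlane',
      A * h z ^ n * thetaQ q (q ^ N * a * z)
        + B * h z ^ m * thetaQ q (-(q ^ M) * a * z)
        + C * h z ^ l * thetaQ q (σ * q ^ L * a * z)
        + D * h z ^ k * thetaQ q (-(σ * q ^ K) * a * z) = 0) :
    A = 0 ∧ B = 0 ∧ C = 0 ∧ D = 0 := by
  have hq0 : q ≠ 0 := norm_pos_iff.mp hq0
  have hσ0 := ne_zero_of_sq_eq hσ hq0
  have hU : slitPlane' ∈ 𝓝 (-1) := isOpen_slitPlane'.mem_nhds (by simp [slitPlane'])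
  have hsq (z : ℂ) (hz : z ∈ slitPlane') : h z ^ 2 = z := hh z ▸ sq_exp_half_mul (hLog z hz)
  have hdiff (c : ℂ) (e d : ℤ) {b : ℂ} (hb : b ≠ 0) :
      DifferentiableOn ℂ (thetaMonomial q c e (σ ^ d * b)) {0}ᶜ :=
    differentiableOn_thetaMonomial hq1 c e (mul_ne_zero (zpow_ne_zero d hσ0) hb)
  have hna : -a ≠ 0 := neg_ne_zero.mpr ha
  refine eq_zero_of_eqOn_thetaMonomial_sum hσ hq0 hq1 ha (eqOn_zero_of_comp_sqrt_eq_zero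
    ((((hdiff A n (2 * N) ha).add (hdiff B m (2 * M) hna)).add (hdiff C l (2 * L + 1) ha)).add
      (hdiff D k (2 * K + 1) hna)) hU (by norm_num) ?_ hsq fun z hz ↦ ?_)
  · rw [show h = _ from funext hh]
    exact Complex.continuous_exp.continuousAt.comp
      (continuousAt_const.mul (hLogHolo.continuousOn.continuousAt hU))
  · have hqσ := zpow_eq_zpow_two_mul hσ
    have hrelz := hrel z hz
    rw [show q ^ N * a = σ ^ (2 * N) * a by rw [hqσ],
      show -(q ^ M) * a = σ ^ (2 * M) * -a by rw [hqσ]; ring,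
      show σ * q ^ L * a = σ ^ (2 * L + 1) * a by rw [hqσ, zpow_add_one₀ hσ0]; ring,
      show -(σ * q ^ K) * a = σ ^ (2 * K + 1) * -a by rw [hqσ, zpow_add_one₀ hσ0]; ring]
      at hrelz
    simpa [thetaMonomial, hsq z hz] using hrelz
end

section
/- Let V ⊆ ℂ be a nonempty connected open set and let f, g be holomorphic functions on V such that 0 < |g(z)| < 1 for all z ∈ V, g is nonconstant on V, and the function z ↦ f(z)/(1 − g(z)) is nonconstant on V. Suppose K ∈ ℂ[X,Y] is a polynomial in two variables such that for every integer n ≥ 0 and every z ∈ V, K( f(z)·(1 − g(z)ⁿ)/(1 − g(z)), g(z)ⁿ ) = 0. Then K = 0. -/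
/-!
Put `h = f / (1 - g)`, so that the points are `(h z (1 - wⁿ), wⁿ)` with `w = g z`. Since
`0 < |g z| < 1`, the powers `g(z)ⁿ` are pairwise distinct, so the one-variable polynomial
`w ↦ K(h z (1 - w), w)` has infinitely many roots and vanishes: `K` vanishes on the line
through `(h z, 0)` and `(0, 1)`. As `h` is continuous and nonconstant on the connected set `V`,
it takes infinitely many values; hence for each `w ≠ 1` the polynomial `K(·, w)` has infinitely
many roots `h z (1 - w)`, so `K(x, w) = 0` for all `x` and all `w ≠ 1`, and then everywhere.
-/

open Polynomial

namespace MvPolynomial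

variable {R : Type*} [CommRing R] [IsDomain R]

lemma eval_pair_eq_zero_of_infinite (K : MvPolynomial (Fin 2) R) (p q : R[X]) {S : Set R}
    (hS : S.Infinite) (h : ∀ u ∈ S, eval ![p.eval u, q.eval u] K = 0) (u : R) :
    eval ![p.eval u, q.eval u] K = 0 := by
  have heval : ∀ u, (aeval ![p, q] K).eval u = eval ![p.eval u, q.eval u] K := fun u => by
    rw [aeval_def, polynomial_eval_eval₂]
    congr 1
    · ext; simp
    · ext i; fin_cases i <;> simp
  have hzero : aeval ![p, q] K = 0 :=
    eq_zero_of_infinite_isRoot _ (hS.mono fun u hu => by simpa [heval] using h u hu)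
  rw [← heval, hzero, Polynomial.eval_zero]

lemma eq_zero_of_infinite_fibres (K : MvPolynomial (Fin 2) R) {B : Set R} (hB : B.Infinite)
    (h : ∀ w ∈ B, {x | eval ![x, w] K = 0}.Infinite) : K = 0 := by
  have hfibre : ∀ w ∈ B, ∀ x, eval ![x, w] K = 0 := fun w hw x => by
    simpa using eval_pair_eq_zero_of_infinite K Polynomial.X (Polynomial.C w) (h w hw) (by simp) x
  have hall : ∀ x w, eval ![x, w] K = 0 := fun x w => by
    simpa using eval_pair_eq_zero_of_infinite K (Polynomial.C x) Polynomial.X hB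
      (by simpa using hfibre · · x) w
  have : Infinite R := hB.to_subtype.of_injective _ Subtype.val_injective
  refine funext fun v => ?_
  rw [show v = ![v 0, v 1] from List.ofFn_inj.mp rfl, hall, map_zero]

end MvPolynomial

lemma infinite_range_pow_of_norm_ne_one {𝕜 : Type*} [NormedDivisionRing 𝕜] {x : 𝕜}
    (hx₀ : x ≠ 0) (hx₁ : ‖x‖ ≠ 1) : (Set.range (x ^ · : ℕ → 𝕜)).Infinite := by
  refine Set.infinite_range_of_injective fun m n hmn => ?_
  have hnorm := congrArg norm hmn
  simp only [norm_pow] at hnorm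
  exact pow_right_injective₀ (norm_pos_iff.mpr hx₀) hx₁ hnorm

theorem polynomial_vanishing_on_orbit_is_zero_general
    (V : Set ℂ) (hVne : V.Nonempty) (hVconn : IsConnected V)
    (f g : ℂ → ℂ)
    (hf : DifferentiableOn ℂ f V) (hg : DifferentiableOn ℂ g V)
    (hg01 : ∀ z ∈ V, 0 < ‖g z‖ ∧ ‖g z‖ < 1)
    (hfnc : ¬ ∃ c : ℂ, ∀ z ∈ V, f z / (1 - g z) = c)
    (K : MvPolynomial (Fin 2) ℂ)
    (hK : ∀ n : ℕ, ∀ z ∈ V,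
      MvPolynomial.eval ![f z * (1 - g z ^ n) / (1 - g z), g z ^ n] K = 0) :
    K = 0 := by
  set h : ℂ → ℂ := fun z => f z / (1 - g z)
  have hline : ∀ z ∈ V, ∀ w, MvPolynomial.eval ![h z * (1 - w), w] K = 0 := fun z hz w => by
    have hroots : ∀ u ∈ Set.range (g z ^ ·), MvPolynomial.eval ![h z * (1 - u), u] K = 0 := by
      rintro _ ⟨n, rfl⟩
      simpa [h, mul_div_right_comm] using hK n z hz
    have := MvPolynomial.eval_pair_eq_zero_of_infinite K
      (Polynomial.C (h z) * (1 - Polynomial.X)) Polynomial.X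
      (infinite_range_pow_of_norm_ne_one (norm_pos_iff.mp (hg01 z hz).1) (hg01 z hz).2.ne)
      (fun u hu => by simpa using hroots u hu) w
    simpa only [eval_mul, eval_C, eval_sub, eval_one, eval_X] using this
  have hsub_ne : ∀ z ∈ V, 1 - g z ≠ 0 := fun z hz hz1 => by
    simpa [(sub_eq_zero.mp hz1).symm] using (hg01 z hz).2
  have himg : (h '' V).Infinite := by
    refine hVconn.isPreconnected.image h
      (hf.continuousOn.div (continuousOn_const.sub hg.continuousOn) hsub_ne)
      |>.infinite_of_nontrivial ?_
    obtain ⟨z₀, hz₀⟩ := hVne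
    obtain ⟨z₁, hz₁, hne⟩ := not_forall₂.mp (not_exists.mp hfnc (h z₀))
    exact ⟨h z₁, ⟨z₁, hz₁, rfl⟩, h z₀, ⟨z₀, hz₀, rfl⟩, hne⟩
  refine MvPolynomial.eq_zero_of_infinite_fibres K (Set.finite_singleton 1).infinite_compl
    fun w hw => ?_
  have hinj : Function.Injective (· * (1 - w)) :=
    mul_left_injective₀ (sub_ne_zero.mpr (Ne.symm hw))
  refine (himg.image hinj.injOn).mono ?_
  rintro _ ⟨_, ⟨z, hz, rfl⟩, rfl⟩
  exact hline z hz w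

/-- Key algebraic-independence step: if a two-variable polynomial `K` vanishes at all the
points `(f(z)(1 - g(z)ⁿ)/(1 - g(z)), g(z)ⁿ)` for `z` in a nonempty connected open set `V`
and all `n ≥ 0`, where `f, g` are holomorphic, `0 < |g| < 1` on `V`, `g` is nonconstant,
and `f/(1-g)` is nonconstant, then `K = 0`. -/
theorem polynomial_vanishing_on_orbit_is_zero
    (V : Set ℂ) (hVne : V.Nonempty) (hVopen : IsOpen V) (hVconn : IsConnected V)
    (f g : ℂ → ℂ)
    (hf : DifferentiableOn ℂ f V) (hg : DifferentiableOn ℂ g V)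
    (hg01 : ∀ z ∈ V, 0 < ‖g z‖ ∧ ‖g z‖ < 1)
    (hgnc : ¬ ∃ c : ℂ, ∀ z ∈ V, g z = c)
    (hfnc : ¬ ∃ c : ℂ, ∀ z ∈ V, f z / (1 - g z) = c)
    (K : MvPolynomial (Fin 2) ℂ)
    (hK : ∀ n : ℕ, ∀ z ∈ V,
      MvPolynomial.eval ![f z * (1 - g z ^ n) / (1 - g z), g z ^ n] K = 0) :
    K = 0 :=
  polynomial_vanishing_on_orbit_is_zero_general V hVne hVconn f g hf hg hg01 hfnc K hK
end
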